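/- arXiv:2503.10684 — 2 statements merged into one kernel-verified Lean document; each statement's English description precedes it below -/
import Mathlib

section
/- Let K, c, m be real numbers with K > 1, 0 < m < c, and (K - 4)·c² > 2. Then K·m/(2(K-1)) + 1/(c·(K-1)) < (K-1)·c/K. (This shows that, under these conditions, the upper bound on the relative predictive probability at a skill transition is strictly smaller than the lower bound at a skill non-transition.) -/
theorem stmt_0 (K c m : ℝ) (hK : 1 < K) (hm : 0 < m) (hmc : m < c)
    (h : (K - 4) * c ^ 2 > 2) :
    K * m / (2 * (K - 1)) + 1 / (c * (K - 1)) < (K - 1) * c / K := by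
  have hc : 0 < c := lt_trans hm hmc
  have hK1 : 0 < K - 1 := by linarith
  have hK4 : 4 < K := by nlinarith [sq_nonneg c]
  rw [div_add_div _ _ (by positivity) (by positivity), div_lt_div_iff₀ (by positivity) (by positivity)]
  nlinarith [mul_pos hc hK1, sq_nonneg (c*(K-1)), mul_lt_mul_of_pos_left hmc (mul_pos (mul_pos hc hK1) (by linarith : (0:ℝ) < K)), mul_pos (mul_pos hc hc) hK1]
end

section
/- (Theorem 1, skill transition bound.) Let (Ω, 𝒜, μ) be a probability space, t ≥ 1 a natural number, and K > 1, c > 0, m > 0, δ ≥ 0 real numbers. Let P_1, …, P_t, P', X_1, …, X_t, r : Ω → ℝ be measurable functions such that for every ω and every i: X_i(ω) > 0, P_i(ω) ≥ ((K-1)/K)·X_i(ω), P'(ω) ≤ r(ω) + 1/K, and r(ω) / (∏_{i=1}^t X_i(ω))^{1/t} < m/2. If μ{ω : X_i(ω) > c} > 1 - δ for every i, then μ{ω : P'(ω) / (∏_{i=1}^t P_i(ω))^{1/t} < K·m/(2(K-1)) + 1/(c·(K-1))} > 1 - t·δ, where powers are real powers with exponent 1/t. -/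
/-!
On the event that every `X i` exceeds `c`, the geometric mean `G` of the `X i` exceeds `c`, and
the geometric mean of the `P i` is at least `(K - 1) / K * G`. Hence the ratio is at most
`(r + 1/K) / ((K - 1) / K * G) < K m / (2 (K - 1)) + 1 / (c (K - 1))`, using `r < m G / 2` and
`1 / G < 1 / c`. By the union bound this event has probability greater than `1 - t δ`.
-/

open MeasureTheory

section GeometricMean

variable {ι : Type*} [Fintype ι]

lemma lt_prod_rpow_one_div_card [Nonempty ι] {c : ℝ} (hc : 0 < c) {x : ι → ℝ}
    (hx : ∀ i, c < x i) : c < (∏ i, x i) ^ ((1 : ℝ) / Fintype.card ι) := by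
  have hcard : Fintype.card ι ≠ 0 := Fintype.card_ne_zero
  have hprod : c ^ Fintype.card ι < ∏ i, x i := by
    simpa using Finset.prod_lt_prod_of_nonempty (fun i _ => hc) (fun i _ => hx i)
      Finset.univ_nonempty
  calc c = (c ^ Fintype.card ι) ^ ((1 : ℝ) / Fintype.card ι) := by
        rw [one_div, Real.pow_rpow_inv_natCast hc.le hcard]
    _ < (∏ i, x i) ^ ((1 : ℝ) / Fintype.card ι) := by gcongr

lemma mul_prod_rpow_one_div_card_le [Nonempty ι] {a : ℝ} (ha : 0 ≤ a) {x p : ι → ℝ}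
    (hx : ∀ i, 0 ≤ x i) (hxp : ∀ i, a * x i ≤ p i) :
    a * (∏ i, x i) ^ ((1 : ℝ) / Fintype.card ι) ≤
      (∏ i, p i) ^ ((1 : ℝ) / Fintype.card ι) := by
  have hprod : a ^ Fintype.card ι * ∏ i, x i ≤ ∏ i, p i := by
    have := Finset.prod_le_prod (s := Finset.univ) (fun i _ => mul_nonneg ha (hx i))
      (fun i _ => hxp i)
    rwa [Finset.prod_mul_distrib, Finset.prod_const, Finset.card_univ] at this
  calc a * (∏ i, x i) ^ ((1 : ℝ) / Fintype.card ι)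
      = (a ^ Fintype.card ι * ∏ i, x i) ^ ((1 : ℝ) / Fintype.card ι) := by
        rw [Real.mul_rpow (by positivity) (Finset.prod_nonneg fun i _ => hx i), one_div,
          Real.pow_rpow_inv_natCast ha Fintype.card_ne_zero]
    _ ≤ (∏ i, p i) ^ ((1 : ℝ) / Fintype.card ι) := by
        gcongr
        exact mul_nonneg (pow_nonneg ha _) (Finset.prod_nonneg fun i _ => hx i)

end GeometricMean

lemma one_sub_card_mul_lt_measureReal_iInter {Ω ι : Type*} [MeasurableSpace Ω] [Fintype ι]
    [Nonempty ι] {μ : Measure Ω} [IsProbabilityMeasure μ] {E : ι → Set Ω} {δ : ℝ}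
    (hE : ∀ i, MeasurableSet (E i)) (hδ : ∀ i, 1 - δ < μ.real (E i)) :
    1 - Fintype.card ι * δ < μ.real (⋂ i, E i) := by
  have hcompl : μ.real (⋂ i, E i)ᶜ < Fintype.card ι * δ :=
    calc μ.real (⋂ i, E i)ᶜ = μ.real (⋃ i, (E i)ᶜ) := by rw [Set.compl_iInter]
      _ ≤ ∑ i, μ.real (E i)ᶜ := measureReal_iUnion_fintype_le _
      _ < ∑ _i : ι, δ := by
        refine Finset.sum_lt_sum_of_nonempty Finset.univ_nonempty fun i _ => ?_
        rw [probReal_compl_eq_one_sub (hE i)]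
        linarith [hδ i]
      _ = Fintype.card ι * δ := by simp
  rw [probReal_compl_eq_one_sub (MeasurableSet.iInter hE)] at hcompl
  linarith

lemma predictive_ratio_lt_of_skill_transition {K c m G Q p r : ℝ} (hK : 1 < K) (hc : 0 < c)
    (hm : 0 < m) (hcG : c < G) (hGQ : (K - 1) / K * G ≤ Q) (hp : p ≤ r + 1 / K)
    (hr : r / G < m / 2) :
    p / Q < K * m / (2 * (K - 1)) + 1 / (c * (K - 1)) := by
  have hK1 : 0 < K - 1 := by linarith
  have hG : 0 < G := hc.trans hcG
  have hQ : 0 < Q := lt_of_lt_of_le (by positivity) hGQ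
  have hrG : r < m / 2 * G := (div_lt_iff₀ hG).1 hr
  rcases le_or_gt (r + 1 / K) 0 with hneg | hpos
  · have : p / Q ≤ 0 := div_nonpos_of_nonpos_of_nonneg (hp.trans hneg) hQ.le
    have : 0 < K * m / (2 * (K - 1)) + 1 / (c * (K - 1)) := by positivity
    linarith
  calc p / Q ≤ (r + 1 / K) / Q := by gcongr
    _ ≤ (r + 1 / K) / ((K - 1) / K * G) := by gcongr
    _ < K * m / (2 * (K - 1)) + 1 / (c * (K - 1)) := by
        rw [div_lt_iff₀ (by positivity)]
        have hcGK : 1 / K < G / (c * K) := by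
          rw [div_lt_div_iff₀ (by positivity) (by positivity)]
          nlinarith
        have hexpand : (K * m / (2 * (K - 1)) + 1 / (c * (K - 1))) * ((K - 1) / K * G)
            = m / 2 * G + G / (c * K) := by
          field_simp
        linarith

theorem stmt_9_general {Ω : Type*} [MeasurableSpace Ω] (μ : Measure Ω) [IsProbabilityMeasure μ]
    (t : ℕ) (ht : 1 ≤ t) (K c m δ : ℝ) (hK : 1 < K) (hc : 0 < c) (hm : 0 < m)
    (P : Fin t → Ω → ℝ) (P' : Ω → ℝ) (X : Fin t → Ω → ℝ) (r : Ω → ℝ)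
    (hXmeas : ∀ i, Measurable (X i))
    (hPX : ∀ ω, ∀ i, ((K - 1) / K) * X i ω ≤ P i ω)
    (hP' : ∀ ω, P' ω ≤ r ω + 1 / K)
    (hr : ∀ ω, r ω / (∏ i, X i ω) ^ ((1 : ℝ) / t) < m / 2)
    (hXc : ∀ i, 1 - δ < (μ {ω | c < X i ω}).toReal) :
    1 - t * δ <
      (μ {ω | P' ω / (∏ i, P i ω) ^ ((1 : ℝ) / t) <
        K * m / (2 * (K - 1)) + 1 / (c * (K - 1))}).toReal := by
  have : Nonempty (Fin t) := ⟨⟨0, ht⟩⟩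
  have hgood : 1 - t * δ < μ.real (⋂ i, {ω | c < X i ω}) := by
    simpa using one_sub_card_mul_lt_measureReal_iInter
      (fun i => measurableSet_lt measurable_const (hXmeas i)) hXc
  refine hgood.trans_le (measureReal_mono fun ω hω => ?_)
  simp only [Set.mem_iInter, Set.mem_ofPred_eq] at hω ⊢
  have hXmean := lt_prod_rpow_one_div_card hc hω
  have hPmean := mul_prod_rpow_one_div_card_le (by bound : 0 ≤ (K - 1) / K)
    (fun i => hc.le.trans (hω i).le) (hPX ω)
  rw [Fintype.card_fin] at hXmean hPmean
  exact predictive_ratio_lt_of_skill_transition hK hc hm hXmean hPmean (hP' ω) (hr ω)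

theorem stmt_9 {Ω : Type*} [MeasurableSpace Ω] (μ : Measure Ω) [IsProbabilityMeasure μ]
    (t : ℕ) (ht : 1 ≤ t) (K c m δ : ℝ) (hK : 1 < K) (hc : 0 < c) (hm : 0 < m)
    (hδ : 0 ≤ δ)
    (P : Fin t → Ω → ℝ) (P' : Ω → ℝ) (X : Fin t → Ω → ℝ) (r : Ω → ℝ)
    (hPmeas : ∀ i, Measurable (P i)) (hP'meas : Measurable P')
    (hXmeas : ∀ i, Measurable (X i)) (hrmeas : Measurable r)
    (hX : ∀ ω, ∀ i, 0 < X i ω)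
    (hPX : ∀ ω, ∀ i, ((K - 1) / K) * X i ω ≤ P i ω)
    (hP' : ∀ ω, P' ω ≤ r ω + 1 / K)
    (hr : ∀ ω, r ω / (∏ i, X i ω) ^ ((1 : ℝ) / t) < m / 2)
    (hXc : ∀ i, 1 - δ < (μ {ω | c < X i ω}).toReal) :
    1 - t * δ <
      (μ {ω | P' ω / (∏ i, P i ω) ^ ((1 : ℝ) / t) <
        K * m / (2 * (K - 1)) + 1 / (c * (K - 1))}).toReal :=
  stmt_9_general μ t ht K c m δ hK hc hm P P' X r hXmeas hPX hP' hr hXc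
end
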